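/- Let X be a finite subset of the projective space P^{s−1} over a field K. The following are equivalent: (a) the vanishing ideal I(X) is a monomial ideal; (b) I(X) = p_1 ∩ ⋯ ∩ p_m, where each p_i is an ideal generated by s−1 of the variables t_1,…,t_s; (c) X ⊆ {[e_1],…,[e_s]}, where e_i is the i-th unit vector of K^s. -/

import Mathlib

open MvPolynomial Finsupp Filter

namespace MDF

open scoped Classical

variable (K : Type*) [Field K] (s : ℕ)

/-- The Hilbert function of `S/I` in degree `d`: `dim_K (S_d / I_d)`. -/
noncomputable def hilbertFn (I : Ideal (MvPolynomial (Fin s) K)) (d : ℕ) : ℕ :=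
  Module.finrank K
    ((homogeneousSubmodule (Fin s) K d) ⧸
      (Submodule.comap (homogeneousSubmodule (Fin s) K d).subtype (I.restrictScalars K)))

/-- The Krull dimension of `S/I`, as a natural number. -/
noncomputable def krullDimQ (I : Ideal (MvPolynomial (Fin s) K)) : ℕ :=
  (((ringKrullDim (MvPolynomial (Fin s) K ⧸ I)).unbotD 0).untopD 0)

/-- The degree (multiplicity) of `S/I`: if `k = dim (S/I) ≥ 1`, it is
`(k-1)! · lim_d H_I(d)/d^(k-1)`, and it is `dim_K (S/I)` if `k = 0`. -/
noncomputable def degQ (I : Ideal (MvPolynomial (Fin s) K)) : ℕ :=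
  if krullDimQ K s I = 0 then Module.finrank K (MvPolynomial (Fin s) K ⧸ I)
  else Classical.epsilon (fun D : ℕ =>
    Tendsto (fun d : ℕ => (hilbertFn K s I d : ℝ) / (d : ℝ) ^ (krullDimQ K s I - 1)) atTop
      (nhds ((D : ℝ) / (Nat.factorial (krullDimQ K s I - 1)))))

/-- The regularity of the Hilbert function of `S/I`: the least `r ≥ 0` from which the
Hilbert function agrees with a polynomial (necessarily the Hilbert polynomial). -/
noncomputable def regQ (I : Ideal (MvPolynomial (Fin s) K)) : ℕ :=
  sInf { r : ℕ | ∃ P : Polynomial ℚ, ∀ d : ℕ, r ≤ d → (hilbertFn K s I d : ℚ) = P.eval (d : ℚ) }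

/-- The height of an ideal: the infimum of the heights of the primes containing it. -/
noncomputable def heightQ (I : Ideal (MvPolynomial (Fin s) K)) : ℕ∞ :=
  ⨅ p ∈ { p : PrimeSpectrum (MvPolynomial (Fin s) K) | I ≤ p.asIdeal }, Order.height p

/-- An ideal is a complete intersection if it can be generated by `ht(I)` elements. -/
def IsCompleteIntersection (I : Ideal (MvPolynomial (Fin s) K)) : Prop :=
  ∃ (n : ℕ) (f : Fin n → MvPolynomial (Fin s) K),
    (n : ℕ∞) = heightQ K s I ∧ I = Ideal.span (Set.range f)

/-- An ideal is unmixed if all its associated primes have the same height. -/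
def IsUnmixed (I : Ideal (MvPolynomial (Fin s) K)) : Prop :=
  ∀ p ∈ associatedPrimes (MvPolynomial (Fin s) K) (MvPolynomial (Fin s) K ⧸ I),
    ∀ q ∈ associatedPrimes (MvPolynomial (Fin s) K) (MvPolynomial (Fin s) K ⧸ I),
      heightQ K s p = heightQ K s q

/-- A graded (homogeneous) ideal: it contains all homogeneous components of its elements. -/
def IsGradedIdeal (I : Ideal (MvPolynomial (Fin s) K)) : Prop :=
  ∀ f ∈ I, ∀ n : ℕ, homogeneousComponent n f ∈ I

variable {K s} in
/-- A graded monomial order: one refining the total degree. -/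
def IsGradedOrder (m : MonomialOrder (Fin s)) : Prop :=
  ∀ a b : Fin s →₀ ℕ, a.degree < b.degree → m.toSyn a < m.toSyn b

variable {s} in
/-- The leading exponent (exponent of the leading monomial) of a polynomial with respect
to a monomial order.  (It is `0` by convention for the zero polynomial.) -/
noncomputable def lExp (m : MonomialOrder (Fin s)) (f : MvPolynomial (Fin s) K) :
    Fin s →₀ ℕ :=
  m.toSyn.symm (f.support.sup (fun a => m.toSyn a))

variable {s} in
/-- The initial ideal of `I`: the ideal generated by the leading monomials of the nonzero
elements of `I`. -/
noncomputable def initIdeal (m : MonomialOrder (Fin s)) (I : Ideal (MvPolynomial (Fin s) K)) :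
    Ideal (MvPolynomial (Fin s) K) :=
  Ideal.span { g | ∃ f ∈ I, f ≠ 0 ∧ g = monomial (lExp K m f) (1 : K) }

variable {s} in
/-- `f` is (or represents) a zero divisor of `S/I`. -/
def IsZeroDivOn (I : Ideal (MvPolynomial (Fin s) K)) (f : MvPolynomial (Fin s) K) : Prop :=
  ∃ g, g ∉ I ∧ f * g ∈ I

variable {s} in
/-- The set `M_{≺,d}` of exponents of the standard monomials of degree `d` that are
zero divisors of `S/in_≺(I)`. -/
noncomputable def Mset (m : MonomialOrder (Fin s)) (I : Ideal (MvPolynomial (Fin s) K))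
    (d : ℕ) : Set (Fin s →₀ ℕ) :=
  { a | a.degree = d ∧ monomial a (1 : K) ∉ initIdeal K m I ∧
      IsZeroDivOn K (initIdeal K m I) (monomial a (1 : K)) }

variable {s} in
/-- The set `F_{≺,d}` of nonzero zero divisors of `S/I` which are `K`-linear combinations
of standard monomials of degree `d`. -/
noncomputable def Fset (m : MonomialOrder (Fin s)) (I : Ideal (MvPolynomial (Fin s) K))
    (d : ℕ) : Set (MvPolynomial (Fin s) K) :=
  { f | f ≠ 0 ∧ (∀ a ∈ f.support, a.degree = d ∧ monomial a (1 : K) ∉ initIdeal K m I) ∧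
      IsZeroDivOn K I f }

variable {s} in
/-- The footprint function `fp_I`. -/
noncomputable def fp (m : MonomialOrder (Fin s)) (I : Ideal (MvPolynomial (Fin s) K))
    (d : ℕ) : ℤ :=
  if (Mset K m I d).Nonempty then
    (degQ K s I : ℤ) -
      sSup ((fun a => (degQ K s (initIdeal K m I ⊔ Ideal.span {monomial a (1 : K)}) : ℤ)) ''
        Mset K m I d)
  else (degQ K s I : ℤ)

variable {s} in
/-- The minimum distance function `δ_I`. -/
noncomputable def delta (m : MonomialOrder (Fin s)) (I : Ideal (MvPolynomial (Fin s) K))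
    (d : ℕ) : ℤ :=
  if (Fset K m I d).Nonempty then
    (degQ K s I : ℤ) -
      sSup ((fun f => (degQ K s (I ⊔ Ideal.span {f}) : ℤ)) '' Fset K m I d)
  else (degQ K s I : ℤ)

variable {s} in
/-- The vanishing ideal of a set of points of projective space: the ideal generated by
the homogeneous polynomials vanishing at (representatives of) all points of `X`. -/
noncomputable def vanishingIdeal (X : Set (Projectivization K (Fin s → K))) :
    Ideal (MvPolynomial (Fin s) K) :=
  Ideal.span { f | (∃ n, f.IsHomogeneous n) ∧ ∀ p ∈ X, eval p.rep f = 0 }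

variable {s} in
/-- The set of zeros in `X` of a (homogeneous) polynomial `f`. -/
def VX (X : Set (Projectivization K (Fin s → K))) (f : MvPolynomial (Fin s) K) :
    Set (Projectivization K (Fin s → K)) :=
  { p ∈ X | eval p.rep f = 0 }

/-!
If `I(𝕏)` is monomial and some `p = [α] ∈ 𝕏` had two nonzero coordinates `α i`, `α j`, let `f`
be a form vanishing on `𝕏 \ {p}` but not at `p` (a product of linear forms) and
`ℓ = α j • t_i - α i • t_j`. Then `f * ℓ ∈ I(𝕏)`, so each of its monomials lies in `I(𝕏)` and
vanishes at `α`, i.e. contains a variable `t_k` with `α k = 0`. Setting these variables to zero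
therefore kills `f * ℓ`, but neither `f` (it does not vanish at `α`) nor `ℓ`: impossible in a
domain. Conversely, a form vanishes at `[e_i]` iff it lies in the ideal of the variables `t_k`,
`k ≠ i`, and `I(𝕏)` is the intersection of these ideals over the points of `𝕏`.
-/

variable {K s}

section MonomialIdeal

variable {σ R : Type*} [CommSemiring R]

def IsMonomialIdeal (I : Ideal (MvPolynomial σ R)) : Prop :=
  ∀ f ∈ I, ∀ m ∈ f.support, monomial m (1 : R) ∈ I

lemma mem_of_forall_monomial_mem {I : Ideal (MvPolynomial σ R)} {f : MvPolynomial σ R}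
    (h : ∀ m ∈ f.support, monomial m (1 : R) ∈ I) : f ∈ I := by
  rw [f.as_sum]
  refine Ideal.sum_mem _ fun m hm => ?_
  simpa [C_mul_monomial] using I.mul_mem_left (C (coeff m f)) (h m hm)

lemma IsMonomialIdeal.mem_of_support_subset {I : Ideal (MvPolynomial σ R)}
    (hI : IsMonomialIdeal I) {f g : MvPolynomial σ R} (hf : f ∈ I)
    (hgf : g.support ⊆ f.support) : g ∈ I :=
  mem_of_forall_monomial_mem fun m hm => hI f hf m (hgf hm)

lemma isMonomialIdeal_iff_exists_eq_span {I : Ideal (MvPolynomial σ R)} :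
    IsMonomialIdeal I ↔
      ∃ A : Set (σ →₀ ℕ), I = Ideal.span ((fun a => monomial a (1 : R)) '' A) := by
  constructor
  · intro hI
    refine ⟨{m | monomial m 1 ∈ I}, le_antisymm (fun f hf => ?_) ?_⟩
    · exact mem_of_forall_monomial_mem fun m hm => Ideal.subset_span ⟨m, hI f hf m hm, rfl⟩
    · rw [Ideal.span_le]
      rintro _ ⟨m, hm, rfl⟩
      exact hm
  · rintro ⟨A, rfl⟩ f hf m hm
    obtain ⟨a, ha, hle⟩ := mem_ideal_span_monomial_image.mp hf m hm
    refine mem_ideal_span_monomial_image.mpr fun m' hm' => ⟨a, ha, ?_⟩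
    rwa [Finset.mem_singleton.mp (support_monomial_subset hm')]

lemma isMonomialIdeal_span_X_image (S : Set σ) :
    IsMonomialIdeal (Ideal.span (X '' S : Set (MvPolynomial σ R))) := by
  intro f hf m hm
  rw [mem_ideal_span_X_image] at hf ⊢
  intro m' hm'
  rw [Finset.mem_singleton.mp (support_monomial_subset hm')]
  exact hf m hm

lemma IsMonomialIdeal.iInf {ι : Sort*} {I : ι → Ideal (MvPolynomial σ R)}
    (hI : ∀ i, IsMonomialIdeal (I i)) : IsMonomialIdeal (⨅ i, I i) := by
  intro f hf m hm
  rw [Ideal.mem_iInf] at hf ⊢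
  exact fun i => hI i f (hf i) m hm

end MonomialIdeal

section Evaluation

variable {σ R : Type*} [CommSemiring R]

noncomputable def killZeros (α : σ → R) : MvPolynomial σ R →ₐ[R] MvPolynomial σ R :=
  aeval fun k => if α k = 0 then 0 else X k

lemma eval_killZeros {α β : σ → R} (h : ∀ k, α k = 0 → β k = 0) (f : MvPolynomial σ R) :
    eval β (killZeros α f) = eval β f := by
  have : (aeval β).comp (killZeros α) = aeval β := by
    refine algHom_ext fun k => ?_
    by_cases hk : α k = 0 <;> simp [killZeros, hk, h k]
  simpa [coe_aeval_eq_eval] using congrArg (fun φ => φ f) this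

lemma killZeros_eq_zero [Nontrivial R] [NoZeroDivisors R] {α : σ → R} {f : MvPolynomial σ R}
    (h : ∀ m ∈ f.support, eval α (monomial m 1) = 0) : killZeros α f = 0 := by
  rw [f.as_sum, map_sum]
  refine Finset.sum_eq_zero fun m hm => ?_
  have hm0 := h m hm
  rw [eval_monomial, one_mul, Finsupp.prod] at hm0
  obtain ⟨k, hk, hαk⟩ := Finset.prod_eq_zero_iff.mp hm0
  have hmk := Finsupp.mem_support_iff.mp hk
  rw [killZeros, aeval_monomial, Finsupp.prod, Finset.prod_eq_zero hk, mul_zero]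
  rw [if_pos ((pow_eq_zero_iff hmk).mp hαk), zero_pow hmk]

lemma span_X_image_le_ker_eval {S : Set σ} {v : σ → R} (hv : ∀ k ∈ S, v k = 0) :
    Ideal.span (X '' S) ≤ RingHom.ker (eval v) :=
  Ideal.span_le.mpr <| by
    rintro _ ⟨k, hk, rfl⟩
    simp [hv k hk]

variable [DecidableEq σ]

lemma eq_single_of_isHomogeneous {f : MvPolynomial σ R} {n : ℕ} (hf : f.IsHomogeneous n)
    {m : σ →₀ ℕ} (hm : m ∈ f.support) {i : σ} (h : ∀ k ≠ i, m k = 0) : m = single i n := by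
  have hmi : m = single i (m i) := by
    ext k
    by_cases hk : k = i
    · simp [hk]
    · simp [h k hk, Finsupp.single_eq_of_ne hk]
  have hdeg : m.degree = n :=
    not_ne_iff.mp fun hne => MvPolynomial.mem_support_iff.mp hm (hf.coeff_eq_zero hne)
  rw [hmi, degree_single] at hdeg
  rwa [← hdeg]

lemma eval_of_isHomogeneous {f : MvPolynomial σ R} {n : ℕ} (hf : f.IsHomogeneous n)
    {v : σ → R} {i : σ} (hv : ∀ k ≠ i, v k = 0) :
    eval v f = coeff (single i n) f * v i ^ n := by
  rw [eval_eq, Finset.sum_eq_single (single i n)]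
  · show coeff _ f * (single i n).prod (fun k e => v k ^ e) = _
    exact congrArg _ (Finsupp.prod_single_index (h := fun k e => v k ^ e) (pow_zero _))
  · intro m hm hne
    obtain ⟨k, hki, hmk⟩ : ∃ k ≠ i, m k ≠ 0 := by
      by_contra! hcon
      exact hne (eq_single_of_isHomogeneous hf hm hcon)
    rw [Finset.prod_eq_zero (Finsupp.mem_support_iff.mpr hmk) (by rw [hv k hki, zero_pow hmk]),
      mul_zero]
  · intro h
    rw [MvPolynomial.notMem_support_iff.mp h, zero_mul]

lemma mem_span_X_compl_of_eval_eq_zero [NoZeroDivisors R] {f : MvPolynomial σ R} {n : ℕ}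
    (hf : f.IsHomogeneous n) {v : σ → R} {i : σ} (hv : ∀ k ≠ i, v k = 0) (hvi : v i ≠ 0)
    (h : eval v f = 0) : f ∈ Ideal.span (X '' {i}ᶜ) := by
  rw [eval_of_isHomogeneous hf hv, mul_eq_zero, or_iff_left (pow_ne_zero _ hvi)] at h
  rw [mem_ideal_span_X_image]
  intro m hm
  by_contra! hcon
  rw [eq_single_of_isHomogeneous hf hm hcon] at hm
  exact MvPolynomial.mem_support_iff.mp hm h

end Evaluation

section Projective

open scoped LinearAlgebra.Projectivization

variable {σ : Type*} [DecidableEq σ]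

lemma pi_single_one_ne_zero (i : σ) : (Pi.single i (1 : K) : σ → K) ≠ 0 :=
  fun h => one_ne_zero (α := K) (by simpa using congrFun h i)

noncomputable def coordPoint (i : σ) : ℙ K (σ → K) :=
  Projectivization.mk K (Pi.single i 1) (pi_single_one_ne_zero (K := K) i)

lemma eq_coordPoint_iff {p : ℙ K (σ → K)} {i : σ} :
    p = coordPoint i ↔ ∀ k ≠ i, p.rep k = 0 := by
  constructor
  · rintro rfl k hk
    obtain ⟨a, ha⟩ :=
      Projectivization.exists_smul_eq_mk_rep K _ (pi_single_one_ne_zero (K := K) i)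
    rw [coordPoint, ← ha]
    simp [Pi.single_eq_of_ne hk]
  · intro h
    rw [← p.mk_rep, coordPoint, Projectivization.mk_eq_mk_iff']
    refine ⟨p.rep i, funext fun k => ?_⟩
    by_cases hk : k = i
    · simp [hk]
    · simp [Pi.single_eq_of_ne hk, h k hk]

lemma coordPoint_rep_self_ne_zero (i : σ) : (coordPoint i : ℙ K (σ → K)).rep i ≠ 0 := by
  intro h
  apply (coordPoint i : ℙ K (σ → K)).rep_nonzero
  funext k
  by_cases hk : k = i
  · rw [hk, h, Pi.zero_apply]
  · exact eq_coordPoint_iff.mp rfl k hk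

lemma exists_linear_form_separating [Fintype σ] {p q : ℙ K (σ → K)} (hpq : p ≠ q) :
    ∃ ℓ : MvPolynomial σ K, ℓ.IsHomogeneous 1 ∧ eval q.rep ℓ = 0 ∧ eval p.rep ℓ ≠ 0 := by
  have hp : p.rep ∉ K ∙ q.rep := by
    rw [Submodule.mem_span_singleton]
    rintro ⟨a, ha⟩
    apply hpq
    rw [← p.mk_rep, ← q.mk_rep, Projectivization.mk_eq_mk_iff']
    exact ⟨a, ha⟩
  obtain ⟨φ, hφp, hφq⟩ := Submodule.exists_dual_map_eq_bot_of_notMem hp inferInstance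
  have hφ : ∀ v, eval v (∑ k, C (φ (Pi.single k 1)) * X k) = φ v := fun v => by
    conv_rhs => rw [← Finset.univ_sum_single v]
    rw [map_sum, map_sum]
    refine Finset.sum_congr rfl fun k _ => ?_
    rw [eval_mul, eval_C, eval_X, mul_comm, ← smul_eq_mul, ← map_smul, ← Pi.single_smul',
      smul_eq_mul, mul_one]
  refine ⟨∑ k, C (φ (Pi.single k 1)) * X k,
    IsHomogeneous.sum _ _ _ fun k _ => isHomogeneous_C_mul_X _ _, ?_, by rwa [hφ]⟩
  rw [hφ]
  exact (Submodule.mem_bot K).mp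
    (hφq ▸ Submodule.mem_map_of_mem (Submodule.mem_span_singleton_self _))

lemma exists_isHomogeneous_separating [Fintype σ] {𝕏 : Set (ℙ K (σ → K))} (h𝕏 : 𝕏.Finite)
    {p : ℙ K (σ → K)} (hp : p ∉ 𝕏) :
    ∃ (f : MvPolynomial σ K) (n : ℕ),
      f.IsHomogeneous n ∧ (∀ q ∈ 𝕏, eval q.rep f = 0) ∧ eval p.rep f ≠ 0 := by
  induction 𝕏, h𝕏 using Set.Finite.induction_on with
  | empty => exact ⟨1, 0, isHomogeneous_one _ _, by simp, by simp⟩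
  | @insert q 𝕏 _ _ ih =>
    obtain ⟨f, n, hf, hf𝕏, hfp⟩ := ih fun h => hp (Set.mem_insert_of_mem _ h)
    obtain ⟨ℓ, hℓ, hℓq, hℓp⟩ := exists_linear_form_separating (p := p) (q := q) <| by
      rintro rfl
      exact hp (Set.mem_insert _ _)
    refine ⟨ℓ * f, 1 + n, hℓ.mul hf, ?_, by simp [hℓp, hfp]⟩
    rintro r (rfl | hr) <;> simp [*]

end Projective

open scoped LinearAlgebra.Projectivization

lemma eval_rep_eq_zero_of_mem_vanishingIdeal {𝕏 : Set (ℙ K (Fin s → K))}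
    {f : MvPolynomial (Fin s) K} (hf : f ∈ vanishingIdeal K 𝕏) {p : ℙ K (Fin s → K)}
    (hp : p ∈ 𝕏) : eval p.rep f = 0 :=
  (Ideal.span_le (I := RingHom.ker (eval p.rep)) |>.mpr fun _ hg => hg.2 p hp) hf

lemma eq_coordPoint_of_isMonomialIdeal {𝕏 : Set (ℙ K (Fin s → K))} (h𝕏 : 𝕏.Finite)
    (hmon : IsMonomialIdeal (vanishingIdeal K 𝕏)) {p : ℙ K (Fin s → K)} (hp : p ∈ 𝕏) :
    ∃ i, p = coordPoint i := by
  set α := p.rep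
  have hα : ∀ i j, α i ≠ 0 → α j ≠ 0 → i = j := by
    intro i j hi hj
    by_contra hij
    obtain ⟨f, n, hf, hf𝕏, hfp⟩ :=
      exists_isHomogeneous_separating (𝕏 := 𝕏 \ {p}) h𝕏.sdiff fun h => h.2 rfl
    set ℓ : MvPolynomial (Fin s) K := C (α j) * X i - C (α i) * X j
    have hℓp : eval α ℓ = 0 := by
      simp only [ℓ, map_sub, map_mul, eval_C, eval_X]
      ring
    have hg : f * ℓ ∈ vanishingIdeal K 𝕏 := by
      refine Ideal.subset_span ⟨⟨n + 1, hf.mul ((isHomogeneous_C_mul_X _ _).sub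
        (isHomogeneous_C_mul_X _ _))⟩, fun q hq => ?_⟩
      rcases eq_or_ne q p with rfl | hqp
      · rw [eval_mul, hℓp, mul_zero]
      · rw [eval_mul, hf𝕏 q ⟨hq, hqp⟩, zero_mul]
    have hκ : killZeros α f * killZeros α ℓ = 0 := by
      rw [← map_mul]
      exact killZeros_eq_zero fun m hm => eval_rep_eq_zero_of_mem_vanishingIdeal (hmon _ hg m hm) hp
    rcases mul_eq_zero.mp hκ with h | h
    · apply hfp
      rw [← eval_killZeros (fun _ => id) f, h, map_zero]
    · have := congrArg (eval (Pi.single i 1)) h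
      rw [eval_killZeros (fun k hk => Pi.single_eq_of_ne (by rintro rfl; exact hi hk) _)] at this
      exact hj (by simpa [ℓ, Pi.single_eq_of_ne (Ne.symm hij)] using this)
  obtain ⟨i, hi⟩ := Function.ne_iff.mp p.rep_nonzero
  exact ⟨i, eq_coordPoint_iff.mpr fun k hk => by_contra fun hk' => hk (hα k i hk' hi)⟩

lemma vanishingIdeal_range_coordPoint {ι : Type*} (e : ι → Fin s) :
    vanishingIdeal K (Set.range (coordPoint ∘ e)) = ⨅ k, Ideal.span (X '' {e k}ᶜ) := by
  apply le_antisymm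
  · rw [vanishingIdeal, Ideal.span_le]
    rintro f ⟨⟨n, hf⟩, hfe⟩
    exact Ideal.mem_iInf.mpr fun k => mem_span_X_compl_of_eval_eq_zero hf
      (fun _ => eq_coordPoint_iff.mp rfl _) (coordPoint_rep_self_ne_zero _) (hfe _ ⟨k, rfl⟩)
  · intro f hf
    rw [← sum_homogeneousComponent f]
    refine Ideal.sum_mem _ fun n _ =>
      Ideal.subset_span ⟨⟨n, homogeneousComponent_isHomogeneous n f⟩, ?_⟩
    rintro _ ⟨k, rfl⟩
    refine span_X_image_le_ker_eval (fun j hj => eq_coordPoint_iff.mp rfl j hj) ?_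
    refine (isMonomialIdeal_span_X_image _).mem_of_support_subset (Ideal.mem_iInf.mp hf k) ?_
    rw [support_homogeneousComponent]
    exact Finset.filter_subset _ _

/-- For a finite set `𝕏` of projective points, the following are
equivalent: (a) `I(𝕏)` is a monomial ideal; (b) `I(𝕏)` is a finite intersection of
ideals generated by `s-1` of the variables; (c) `𝕏` is contained in the set of points
`[e_1], …, [e_s]` given by the unit vectors. -/
theorem vanishingIdeal_monomial_tfae
    {K : Type*} [Field K] {s : ℕ}
    (𝕏 : Set (Projectivization K (Fin s → K))) (hfin : 𝕏.Finite) :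
    List.TFAE [
      (∃ A : Set (Fin s →₀ ℕ),
        vanishingIdeal K 𝕏 =
          Ideal.span ((fun a => (monomial a (1 : K) : MvPolynomial (Fin s) K)) '' A)),
      (∃ (mm : ℕ) (v : Fin mm → Finset (Fin s)), (∀ i, (v i).card = s - 1) ∧
        vanishingIdeal K 𝕏 =
          ⨅ i, Ideal.span ((fun j => (X j : MvPolynomial (Fin s) K)) '' (v i))),
      𝕏 ⊆ { q | ∃ i : Fin s,
        q = Projectivization.mk K (Pi.single i (1 : K)) (fun h => one_ne_zero (α := K) (by simpa using congrFun h i)) } ] := by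
  tfae_have 1 → 3 := fun h _ hp =>
    eq_coordPoint_of_isMonomialIdeal hfin (isMonomialIdeal_iff_exists_eq_span.mpr h) hp
  tfae_have 3 → 2 := by
    intro (h : 𝕏 ⊆ {q | ∃ i, q = coordPoint i})
    set T := Finset.univ.filter fun i : Fin s => coordPoint i ∈ 𝕏
    set e : Fin T.card → Fin s := fun k => T.equivFin.symm k
    have h𝕏 : 𝕏 = Set.range (coordPoint ∘ e) := by
      ext p
      constructor
      · intro hp
        obtain ⟨i, rfl⟩ := h hp
        exact ⟨T.equivFin ⟨i, by simpa [T] using hp⟩, by simp [e]⟩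
      · rintro ⟨k, rfl⟩
        exact (Finset.mem_filter.mp (T.equivFin.symm k).2).2
    refine ⟨T.card, fun k => {e k}ᶜ, fun k => by simp [Finset.card_compl], ?_⟩
    simp only [Finset.coe_compl, Finset.coe_singleton]
    exact h𝕏 ▸ vanishingIdeal_range_coordPoint e
  tfae_have 2 → 1 := by
    rintro ⟨mm, v, -, hv⟩
    exact isMonomialIdeal_iff_exists_eq_span.mp
      (hv ▸ IsMonomialIdeal.iInf fun i => isMonomialIdeal_span_X_image _)
  tfae_finish

end MDF
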